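/- Let m be a positive integer, N an integer, and let (c_j)_{j∈ℕ} be a sequence in ℤ^m with c_j(i) ≥ −N for all j and i. For each j set H_j = { t ∈ ℝ^m : t(i) ≥ 0 for all i, Σᵢ t(i) = 1, and Σᵢ t(i)·c_j(i) ≥ 0 }. Then there exists a finite subset S ⊆ ℕ such that ⋂_{j∈ℕ} H_j = ⋂_{j∈S} H_j. -/

import Mathlib

/-!
The integer vectors `c j` are bounded below, so by Dickson's lemma their range is partially
well-ordered: it has finitely many minimal elements and every `c j` dominates one of them.
Since the points of the simplex have nonnegative coordinates, `c s ≤ c j` gives `H s ⊆ H j`,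
so the indices of the minimal elements form the required finite set.
-/

open Set

theorem Set.IsPWO.exists_finite_subset_forall_exists_le {α : Type*} [PartialOrder α]
    {s : Set α} (hs : s.IsPWO) : ∃ t ⊆ s, t.Finite ∧ ∀ a ∈ s, ∃ b ∈ t, b ≤ a := by
  refine ⟨{x | Minimal (· ∈ s) x}, fun x hx => hx.prop, ?_, fun a ha => ?_⟩
  · exact (setOfPred_minimal_antichain _).finite_of_partiallyWellOrderedOn
      (hs.mono fun x hx => hx.prop)
  · obtain ⟨b, hba, hb⟩ := hs.exists_le_minimal ha
    exact ⟨b, hb, hba⟩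

theorem exists_finset_forall_exists_le_of_isPWO_range {ι α : Type*} [PartialOrder α]
    {f : ι → α} (hf : (range f).IsPWO) : ∃ S : Finset ι, ∀ j, ∃ i ∈ S, f i ≤ f j := by
  obtain ⟨t, -, ht, hcover⟩ := exists_subset_image_finite_and.1
    (image_univ (f := f) ▸ hf.exists_finite_subset_forall_exists_le)
  refine ⟨ht.toFinset, fun j => ?_⟩
  obtain ⟨_, ⟨i, hi, rfl⟩, hle⟩ := hcover (f j) (mem_image_of_mem f (mem_univ j))
  exact ⟨i, ht.mem_toFinset.2 hi, hle⟩

theorem Pi.isPWO_of_bddBelow {ι α : Type*} [Finite ι] [LinearOrder α] [LocallyFiniteOrder α]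
    {s : Set (ι → α)} (hs : BddBelow s) : s.IsPWO := by
  obtain ⟨a, ha⟩ := hs
  exact (IsPWO.pi fun i => (bddBelow_Ici (a := a i)).isWF.isPWO).mono
    fun v hv i _ => ha hv i

theorem stmt_4_general (m : ℕ) (N : ℤ) (c : ℕ → Fin m → ℤ)
    (hbdd : ∀ j i, -N ≤ c j i)
    (H : ℕ → Set (Fin m → ℝ))
    (hH : ∀ j, H j = {t : Fin m → ℝ | (∀ i, 0 ≤ t i) ∧ (∑ i, t i) = 1 ∧
      0 ≤ ∑ i, t i * (c j i : ℝ)}) :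
    ∃ S : Finset ℕ, (⋂ j : ℕ, H j) = ⋂ j ∈ S, H j := by
  have hc : BddBelow (range c) := ⟨fun _ => -N, by rintro _ ⟨j, rfl⟩ i; exact hbdd j i⟩
  obtain ⟨S, hS⟩ := exists_finset_forall_exists_le_of_isPWO_range (Pi.isPWO_of_bddBelow hc)
  refine ⟨S, Subset.antisymm (fun t ht => mem_iInter₂.2 fun j _ => mem_iInter.1 ht j)
    fun t ht => mem_iInter.2 fun j => ?_⟩
  obtain ⟨s, hs, hle⟩ := hS j
  have hts : t ∈ H s := mem_iInter₂.1 ht s hs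
  rw [hH] at hts ⊢
  obtain ⟨hpos, hsum, hdot⟩ := hts
  have hmono : ∑ i, t i * (c s i : ℝ) ≤ ∑ i, t i * (c j i : ℝ) :=
    Finset.sum_le_sum fun i _ => mul_le_mul_of_nonneg_left (by exact_mod_cast hle i) (hpos i)
  exact ⟨hpos, hsum, hdot.trans hmono⟩

/-- Stabilization of countably many rational half-space conditions on the simplex:
the intersection of all `H j` equals a finite subintersection. -/
theorem stmt_4 (m : ℕ) (hm : 0 < m) (N : ℤ) (c : ℕ → Fin m → ℤ)
    (hbdd : ∀ j i, -N ≤ c j i)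
    (H : ℕ → Set (Fin m → ℝ))
    (hH : ∀ j, H j = {t : Fin m → ℝ | (∀ i, 0 ≤ t i) ∧ (∑ i, t i) = 1 ∧
      0 ≤ ∑ i, t i * (c j i : ℝ)}) :
    ∃ S : Finset ℕ, (⋂ j : ℕ, H j) = ⋂ j ∈ S, H j :=
  stmt_4_general m N c hbdd H hH
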